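/- arXiv:1601.04433 — 9 statements merged into one kernel-verified Lean document; each statement's English description precedes it below -/
import Mathlib

section
/- If the continuum satisfies 2^ℵ₀ ≤ κ⁺ for an infinite cardinal κ, then ℝ \ {0} can be covered by κ-many rationally independent sets (sets S ⊆ ℝ such that every finite ℚ-linear combination of distinct elements of S with nonzero rational coefficients is nonzero). -/
/-!
Well-order a Hamel basis of ℝ over ℚ in order type the initial ordinal of its cardinality, so that
every proper initial segment has at most `κ` elements. A nonzero real `x` has a leading basis index
(the largest one in its support), and the reals with leading index at most `i` lie in the span of
`≤ κ` basis vectors over the countable field ℚ, so each fibre of the leading index has size `≤ κ`.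
Colouring every fibre injectively by `κ` colours, a colour class has pairwise distinct leading
indices, and such a set is linearly independent: in a vanishing combination, the element with
the largest leading index is the only one contributing to that basis coordinate.
-/

open Cardinal Set Submodule Module

universe u

theorem Cardinal.mk_finsupp_le_of_le {α β : Type u} [Zero β] {κ : Cardinal.{u}} (hκ : ℵ₀ ≤ κ)
    (hα : #α ≤ κ) (hβ : #β ≤ κ) : #(α →₀ β) ≤ κ := by
  classical
  calc #(α →₀ β) ≤ #(Finset (α × β)) := mk_le_of_injective (Finsupp.graph_injective α β)
    _ ≤ #(List (α × β)) := mk_le_of_surjective List.toFinset_surjective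
    _ ≤ max ℵ₀ #(α × β) := mk_list_le_max _
    _ ≤ κ := max_le hκ (by rw [mk_prod, lift_id, lift_id]; exact mul_le_of_le hκ hα hβ)

theorem Cardinal.exists_injective_prod_mk_of_mk_preimage_le {α β γ : Type u} (f : α → β)
    (hf : ∀ b, #(f ⁻¹' {b}) ≤ #γ) : ∃ c : α → γ, Function.Injective fun a ↦ (f a, c a) := by
  have e : ∀ b, {a // f a = b} ↪ γ := fun b ↦ ((le_def _ _).1 (hf b)).some
  let g : α ↪ β × γ := ((Equiv.sigmaFiberEquiv f).symm.toEmbedding.trans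
    ((Function.Embedding.refl β).sigmaMap (β' := fun _ ↦ γ) e)).trans
    (Equiv.sigmaEquivProd β γ).toEmbedding
  exact ⟨fun a ↦ (g a).2, g.injective⟩

namespace Module.Basis

section

variable {ι K V : Type*} [LinearOrder ι] [DivisionRing K] [AddCommGroup V] [Module K V]
  (b : Basis ι K V)

noncomputable def leadingIndex (x : V) : WithBot ι := (b.repr x).support.max

theorem repr_eq_zero_of_mem_span {s : Set V} {i : ι} (hs : ∀ y ∈ s, b.leadingIndex y < i)
    {x : V} (hx : x ∈ span K s) : b.repr x i = 0 := by
  have hker : span K s ≤ LinearMap.ker (b.coord i) := span_le.2 fun y hy ↦ by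
    rw [SetLike.mem_coe, LinearMap.mem_ker, coord_apply, ← Finsupp.notMem_support_iff]
    exact fun hi ↦ (Finset.le_max hi).not_gt (hs y hy)
  simpa using hker hx

theorem linearIndepOn_of_injOn_leadingIndex {s : Set V} (h0 : (0 : V) ∉ s)
    (hinj : InjOn b.leadingIndex s) : LinearIndepOn K id s := by
  classical
  refine linearIndepOn_of_finite s fun t hts htfin ↦ ?_
  lift t to Finset V using htfin
  induction t using Finset.induction_on_max_value b.leadingIndex with
  | empty => simp
  | insert x t hxt hmax ih =>
    rw [Finset.coe_insert] at hts ⊢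
    have hxs : x ∈ s := hts (mem_insert x _)
    have hts' : ↑t ⊆ s := (subset_insert x _).trans hts
    obtain ⟨i, hi⟩ : ∃ i : ι, b.leadingIndex x = i := Finset.max_of_nonempty <|
      Finsupp.support_nonempty_iff.2 <| by simpa using ne_of_mem_of_not_mem hxs h0
    have hlt : ∀ y ∈ (t : Set V), b.leadingIndex y < i := fun y hy ↦
      hi ▸ (hmax y hy).lt_of_ne fun h ↦ hxt (hinj (hts' hy) hxs h ▸ hy)
    refine (ih hts').id_insert fun hspan ↦ ?_
    exact Finsupp.mem_support_iff.1 (Finset.mem_of_max hi) (b.repr_eq_zero_of_mem_span hlt hspan)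

end

theorem mk_setOf_leadingIndex_le {ι K V : Type u} [LinearOrder ι] [DivisionRing K]
    [AddCommGroup V] [Module K V] (b : Basis ι K V) (w : WithBot ι) :
    #{x : V | b.leadingIndex x ≤ w} ≤ #({i : ι | (i : WithBot ι) ≤ w} →₀ K) := by
  let t : Set ι := {i | (i : WithBot ι) ≤ w}
  have hsupp (x : {x : V | b.leadingIndex x ≤ w}) : b.repr x ∈ Finsupp.supported K K t :=
    (Finsupp.mem_supported K _).2 fun _ hi ↦ (Finset.le_max hi).trans x.2
  calc _ ≤ #(Finsupp.supported K K t) :=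
        mk_le_of_injective (α := {x : V | b.leadingIndex x ≤ w}) (f := fun x ↦ ⟨b.repr x, hsupp x⟩)
          fun x y hxy ↦ Subtype.ext (b.repr.injective (congrArg Subtype.val hxy))
    _ = _ := (Finsupp.supportedEquivFinsupp _).toEquiv.cardinal_eq

end Module.Basis

theorem exists_linearIndependent_cover_of_rank_le_succ {K V : Type u} [DivisionRing K]
    [AddCommGroup V] [Module K V] (κ : Cardinal.{u}) (hκ : ℵ₀ ≤ κ) (hK : #K ≤ κ)
    (hV : Module.rank K V ≤ Order.succ κ) :
    ∃ (ι : Type u) (S : ι → Set V), #ι ≤ κ ∧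
      (∀ i, LinearIndependent K ((↑) : S i → V)) ∧ {x : V | x ≠ 0} ⊆ ⋃ i, S i := by
  let B := Basis.ofVectorSpace K V
  let I := (#(Basis.ofVectorSpaceIndex K V)).ord.ToType
  let b : Basis I K V := B.reindex (Cardinal.eq.1 (mk_ord_toType _).symm).some
  have hIio (i : I) : #(Iio i) ≤ κ := by
    refine Order.lt_succ_iff.1 <| (mk_Iio_lt i ?_).trans_le ?_
    · rw [mk_ord_toType, Ordinal.type_toType]
    · rwa [mk_ord_toType, B.mk_eq_rank'']
  have hIic (w : WithBot I) : #{i : I | (i : WithBot I) ≤ w} ≤ κ := by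
    induction w with
    | bot => simp
    | coe j =>
      calc #{i : I | (i : WithBot I) ≤ j} = #(insert j (Iio j) : Set I) := by
            rw [Iio_insert]; simp only [WithBot.coe_le_coe]; rfl
        _ ≤ κ + 1 := mk_insert_le.trans (add_le_add_left (hIio j) 1)
        _ = κ := add_one_eq hκ
  have hfibre (w : WithBot I) : #(b.leadingIndex ⁻¹' {w}) ≤ #κ.out := by
    rw [mk_out]
    exact (mk_le_mk_of_subset fun x hx ↦ le_of_eq hx).trans <|
      (b.mk_setOf_leadingIndex_le w).trans (mk_finsupp_le_of_le hκ (hIic w) hK)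
  obtain ⟨c, hc⟩ := exists_injective_prod_mk_of_mk_preimage_le b.leadingIndex hfibre
  refine ⟨κ.out, fun t ↦ {x | x ≠ 0 ∧ c x = t}, (mk_out κ).le, fun t ↦ ?_,
    fun x hx ↦ mem_iUnion.2 ⟨c x, hx, rfl⟩⟩
  exact b.linearIndepOn_of_injOn_leadingIndex (fun h ↦ h.1 rfl) fun x hx y hy hxy ↦
    hc (Prod.ext hxy (hx.2.trans hy.2.symm))

theorem stmt0 (κ : Cardinal.{0}) (hκ : ℵ₀ ≤ κ) (h : 𝔠 ≤ Order.succ κ) :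
    ∃ (ι : Type) (S : ι → Set ℝ), #ι ≤ κ ∧
      (∀ i, LinearIndependent ℚ ((↑) : S i → ℝ)) ∧
      {x : ℝ | x ≠ 0} ⊆ ⋃ i, S i :=
  exists_linearIndependent_cover_of_rank_le_succ κ hκ (by simpa using hκ)
    ((rank_le_card ℚ ℝ).trans (by rwa [mk_real]))
end

section
/- If ℝ \ {0} can be covered by κ-many rationally independent sets (for κ an infinite cardinal), then 2^ℵ₀ ≤ κ⁺, assuming the Komjáth–Totik partition property: whenever 2^ℵ₀ ≥ (κ⁺)⁺, every coloring g : ℝ → κ admits distinct reals x₀₀, x₀₁, x₁₀, x₁₁ of the same color with x₀₀ + x₁₁ = x₀₁ + x₁₀. -/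
/-!
Colour each nonzero real by an index `i` of an independent set `S i` containing it (and `0`
arbitrarily). If `𝔠 > κ⁺`, the Komjáth–Totik property yields four distinct reals of one colour `i`
with `x₀₀ + x₁₁ = x₀₁ + x₁₀`, all lying in `S i ∪ {0}`. One of `x₀₀, x₁₁` is nonzero, hence in
`S i`, and the relation puts it in the span of the other elements of `S i`.
-/

open Cardinal Submodule

section QuadrupleRelation

variable {R M : Type*} [Ring R] [Nontrivial R] [AddCommGroup M] [Module R M] {S : Set M}

theorem LinearIndepOn.add_ne_add_of_mem (hS : LinearIndepOn R id S) {a b c d : M} (ha : a ∈ S)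
    (hb : b ∈ insert 0 S) (hc : c ∈ insert 0 S) (hd : d ∈ insert 0 S)
    (hab : a ≠ b) (hac : a ≠ c) (had : a ≠ d) : a + d ≠ b + c := by
  intro hsum
  have hspan : ∀ x ∈ insert 0 S, x ≠ a → x ∈ span R (id '' (S \ {a})) := by
    rintro x (rfl | hx) hxa
    · exact zero_mem _
    · exact subset_span ⟨x, ⟨hx, hxa⟩, rfl⟩
  have hmem : b + c - d ∈ span R (id '' (S \ {a})) :=
    sub_mem (add_mem (hspan b hb hab.symm) (hspan c hc hac.symm)) (hspan d hd had.symm)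
  rw [← eq_sub_of_add_eq hsum] at hmem
  exact hS.notMem_span ha hmem

theorem LinearIndepOn.add_ne_add (hS : LinearIndepOn R id S) {a b c d : M}
    (ha : a ∈ insert 0 S) (hb : b ∈ insert 0 S) (hc : c ∈ insert 0 S) (hd : d ∈ insert 0 S)
    (hab : a ≠ b) (hac : a ≠ c) (had : a ≠ d) (hbd : b ≠ d) (hcd : c ≠ d) :
    a + d ≠ b + c := by
  by_cases ha0 : a = 0
  · have hdS : d ∈ S := (Set.mem_insert_iff.mp hd).resolve_left (ha0 ▸ had.symm)
    rw [add_comm a, add_comm b]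
    exact hS.add_ne_add_of_mem hdS hc hb ha hcd.symm hbd.symm had.symm
  · exact hS.add_ne_add_of_mem ((Set.mem_insert_iff.mp ha).resolve_left ha0) hb hc hd hab hac had

end QuadrupleRelation

theorem stmt1_general (κ : Cardinal.{0})
    (KT : Order.succ (Order.succ κ) ≤ 𝔠 →
      ∀ (C : Type) (g : ℝ → C), #C ≤ κ →
        ∃ x00 x01 x10 x11 : ℝ, x00 ≠ x01 ∧ x00 ≠ x10 ∧ x00 ≠ x11 ∧ x01 ≠ x10 ∧
          x01 ≠ x11 ∧ x10 ≠ x11 ∧ g x00 = g x01 ∧ g x00 = g x10 ∧ g x00 = g x11 ∧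
          x00 + x11 = x01 + x10)
    (hcov : ∃ (ι : Type) (S : ι → Set ℝ), #ι ≤ κ ∧
      (∀ i, LinearIndependent ℚ ((↑) : S i → ℝ)) ∧
      {x : ℝ | x ≠ 0} ⊆ ⋃ i, S i) :
    𝔠 ≤ Order.succ κ := by
  by_contra! hlt
  obtain ⟨ι, S, hι, hind, hsub⟩ := hcov
  obtain ⟨i₀, -⟩ := Set.mem_iUnion.mp (hsub one_ne_zero)
  have hcolour : ∀ x : ℝ, ∃ i, x ≠ 0 → x ∈ S i := fun x ↦ by
    by_cases hx : x = 0
    · exact ⟨i₀, fun h ↦ absurd hx h⟩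
    · obtain ⟨i, hi⟩ := Set.mem_iUnion.mp (hsub hx)
      exact ⟨i, fun _ ↦ hi⟩
  choose g hg using hcolour
  have hclass : ∀ x, x ∈ insert 0 (S (g x)) := fun x ↦ by
    by_cases hx : x = 0
    · exact Or.inl hx
    · exact Or.inr (hg x hx)
  obtain ⟨x00, x01, x10, x11, h01, h02, h03, -, h13, h23, g01, g02, g03, hsum⟩ :=
    KT (Order.succ_le_of_lt hlt) ι g hι
  refine LinearIndepOn.add_ne_add (hind (g x00)) (hclass x00) ?_ ?_ ?_ h01 h02 h03 h13 h23 hsum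
  · exact g01 ▸ hclass x01
  · exact g02 ▸ hclass x10
  · exact g03 ▸ hclass x11

theorem stmt1 (κ : Cardinal.{0}) (hκ : ℵ₀ ≤ κ)
    (KT : Order.succ (Order.succ κ) ≤ 𝔠 →
      ∀ (C : Type) (g : ℝ → C), #C ≤ κ →
        ∃ x00 x01 x10 x11 : ℝ, x00 ≠ x01 ∧ x00 ≠ x10 ∧ x00 ≠ x11 ∧ x01 ≠ x10 ∧
          x01 ≠ x11 ∧ x10 ≠ x11 ∧ g x00 = g x01 ∧ g x00 = g x10 ∧ g x00 = g x11 ∧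
          x00 + x11 = x01 + x10)
    (hcov : ∃ (ι : Type) (S : ι → Set ℝ), #ι ≤ κ ∧
      (∀ i, LinearIndependent ℚ ((↑) : S i → ℝ)) ∧
      {x : ℝ | x ≠ 0} ⊆ ⋃ i, S i) :
    𝔠 ≤ Order.succ κ :=
  stmt1_general κ KT hcov
end

section
/- If 2^ℵ₀ ≥ (κ⁺)⁺ for an infinite cardinal κ, and assuming that for any sets A, B with |A| = κ⁺ and |B| = (κ⁺)⁺ every coloring f : A × B → κ admits, for each k ∈ ℕ, subsets A' ⊆ A, B' ⊆ B with |A'| = |B'| = k such that A' × B' is monochromatic, then for every coloring g : ℝ → κ there exist distinct reals x₀₀, x₀₁, x₁₀, x₁₁ of the same color with x₀₀ + x₁₁ = x₀₁ + x₁₀. -/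
open Cardinal

theorem stmt2 (κ : Cardinal.{0}) (hκ : ℵ₀ ≤ κ) (h : Order.succ (Order.succ κ) ≤ 𝔠)
    (KT : ∀ (A B C : Type) (f : A × B → C), #A = Order.succ κ →
        #B = Order.succ (Order.succ κ) → #C ≤ κ → ∀ k : ℕ,
        ∃ (A' : Finset A) (B' : Finset B), A'.card = k ∧ B'.card = k ∧
          ∃ c, ∀ a ∈ A', ∀ b ∈ B', f (a, b) = c)
    (C : Type) (g : ℝ → C) (hC : #C ≤ κ) :
    ∃ x00 x01 x10 x11 : ℝ, x00 ≠ x01 ∧ x00 ≠ x10 ∧ x00 ≠ x11 ∧ x01 ≠ x10 ∧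
      x01 ≠ x11 ∧ x10 ≠ x11 ∧ g x00 = g x01 ∧ g x00 = g x10 ∧ g x00 = g x11 ∧
      x00 + x11 = x01 + x10 := by
  classical
  -- a ℚ-linear equivalence ℝ × ℝ ≃ ℝ
  have hrank : Module.rank ℚ (ℝ × ℝ) = Module.rank ℚ ℝ := by
    rw [rank_prod', Real.rank_rat_real]
    exact Cardinal.add_eq_self aleph0_le_continuum
  obtain ⟨e⟩ := nonempty_linearEquiv_of_rank_eq hrank
  -- types of cardinality κ⁺ and κ⁺⁺ with embeddings into ℝ
  set A : Type := (Order.succ κ).out with hA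
  set B : Type := (Order.succ (Order.succ κ)).out with hB
  have hmkA : #A = Order.succ κ := mk_out _
  have hmkB : #B = Order.succ (Order.succ κ) := mk_out _
  have hAle : #A ≤ #ℝ := by
    rw [hmkA, Cardinal.mk_real]
    exact le_trans (le_of_lt (Order.lt_succ _)) h
  have hBle : #B ≤ #ℝ := by rw [hmkB, Cardinal.mk_real]; exact h
  obtain ⟨α⟩ := Cardinal.le_def _ _ |>.mp hAle
  obtain ⟨β⟩ := Cardinal.le_def _ _ |>.mp hBle
  -- the induced coloring
  set f : A × B → C := fun p => g (e (α p.1, β p.2)) with hf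
  obtain ⟨A', B', hA2, hB2, c, hc⟩ := KT A B C f hmkA hmkB hC 2
  obtain ⟨a0, a1, ha01, hAs⟩ := Finset.card_eq_two.mp hA2
  obtain ⟨b0, b1, hb01, hBs⟩ := Finset.card_eq_two.mp hB2
  have ha0 : a0 ∈ A' := by simp [hAs]
  have ha1 : a1 ∈ A' := by simp [hAs]
  have hb0 : b0 ∈ B' := by simp [hBs]
  have hb1 : b1 ∈ B' := by simp [hBs]
  refine ⟨e (α a0, β b0), e (α a0, β b1), e (α a1, β b0), e (α a1, β b1),
    ?_, ?_, ?_, ?_, ?_, ?_, ?_, ?_, ?_, ?_⟩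
  · intro hne
    exact hb01 (β.injective (congrArg Prod.snd (e.injective hne)))
  · intro hne
    exact ha01 (α.injective (congrArg Prod.fst (e.injective hne)))
  · intro hne
    exact ha01 (α.injective (congrArg Prod.fst (e.injective hne)))
  · intro hne
    exact ha01 (α.injective (congrArg Prod.fst (e.injective hne)))
  · intro hne
    exact ha01 (α.injective (congrArg Prod.fst (e.injective hne)))
  · intro hne
    exact hb01 (β.injective (congrArg Prod.snd (e.injective hne)))
  · exact (hc a0 ha0 b0 hb0).trans (hc a0 ha0 b1 hb1).symm
  · exact (hc a0 ha0 b0 hb0).trans (hc a1 ha1 b0 hb0).symm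
  · exact (hc a0 ha0 b0 hb0).trans (hc a1 ha1 b1 hb1).symm
  · rw [← map_add, ← map_add]
    congr 1
    simp [Prod.ext_iff, add_comm]
end

section
/- Let H be a Hamel basis of ℝ over ℚ equipped with a linear order ◁. For n > 1 and s ∈ (ℚ \ {0})ⁿ, let s·Hⁿ be the set of reals of the form Σᵢ s(i)hᵢ with h₀ ◁ ⋯ ◁ h_{n-1} in H, and for x ∈ s·Hⁿ let last(x) = h_{n-1} in this (unique) representation. Then any subset S ⊆ s·Hⁿ such that last is injective on S is ℚ-linearly independent. -/
/-!
Write each `x ∈ S` by its coordinate vector over the linearly independent set `H`. Its support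
is `{h₀, …, h_{n-1}}` and, along the order `◁`, its largest element is `last x`, with coefficient
`s (n - 1) ≠ 0`. In a vanishing rational combination of elements of `S`, take an `x` with
nonzero coefficient whose `last x` is `◁`-maximal: by injectivity of `last`, no other term has
`last x` in its support, so the coordinate of the combination at `last x` cannot vanish.
-/

open Finsupp Function

theorem Finsupp.linearIndependent_of_injective_top {R ι κ : Type*} [Ring R] [NoZeroDivisors R]
    (r : ι → ι → Prop) [IsStrictOrder ι r] (c : κ → ι →₀ R) (top : κ → ι)
    (htop_inj : Injective top) (htop : ∀ k, c k (top k) ≠ 0)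
    (hle : ∀ k i, c k i ≠ 0 → i = top k ∨ r i (top k)) :
    LinearIndependent R c := by
  let := partialOrderOfSO r
  rw [linearIndependent_iff]
  intro l hl
  by_contra hl0
  obtain ⟨k, hk, hmax⟩ := l.support.exists_maximalFor top (support_nonempty_iff.2 hl0)
  have hcoord : linearCombination R c l (top k) = l k * c k (top k) := by
    rw [linearCombination_apply, Finsupp.sum, finsetSum_apply, Finset.sum_eq_single k]
    · rfl
    · intro j hj hjk
      by_contra hne
      rcases hle j (top k) (right_ne_zero_of_mul hne) with h | h
      · exact hjk (htop_inj h.symm)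
      · exact (hmax hj (show top k < top j from h).le).not_gt h
    · exact fun hk' => absurd hk hk'
  rw [hl, zero_apply] at hcoord
  exact mul_ne_zero (mem_support_iff.1 hk) (htop k) hcoord.symm

theorem injective_of_forall_lt_rel {α ι : Type*} [LinearOrder α] (r : ι → ι → Prop) [Std.Irrefl r]
    {g : α → ι} (hg : ∀ i j, i < j → r (g i) (g j)) : Injective g := by
  intro i j hij
  by_contra hne
  rcases lt_or_gt_of_ne hne with h | h
  · exact irrefl_of r (g j) (hij ▸ hg i j h)
  · exact irrefl_of r (g i) (hij ▸ hg j i h)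

theorem Finsupp.mapDomain_apply_ne_zero_of_forall_lt_rel {α ι R : Type*} [LinearOrder α]
    [AddCommMonoid R] (r : ι → ι → Prop) {g : α → ι} (hg : ∀ i j, i < j → r (g i) (g j))
    (s : α →₀ R) {j₀ : α} (hj₀ : ∀ i, i ≤ j₀) {a : ι} (ha : mapDomain g s a ≠ 0) :
    a = g j₀ ∨ r a (g j₀) := by
  obtain ⟨j, rfl⟩ : a ∈ Set.range g := by
    by_contra h
    exact ha (mapDomain_of_notMem_range s a h)
  rcases (hj₀ j).lt_or_eq with h | rfl
  · exact .inr (hg j j₀ h)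
  · exact .inl rfl

theorem stmt4 (H : Set ℝ) (hind : LinearIndependent ℚ ((↑) : H → ℝ))
    (r : ℝ → ℝ → Prop) (hr : IsStrictTotalOrder ℝ r)
    (n : ℕ) (hn : 1 < n) (s : Fin n → ℚ) (hs : ∀ i, s i ≠ 0)
    (S : Set ℝ) (L : ℝ → ℝ)
    (hS : ∀ x ∈ S, ∃ h : Fin n → ℝ, (∀ i, h i ∈ H) ∧
      (∀ i j : Fin n, i < j → r (h i) (h j)) ∧
      x = ∑ i, (s i : ℝ) * h i ∧ L x = h ⟨n - 1, by omega⟩)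
    (hL : Set.InjOn L S) :
    LinearIndependent ℚ ((↑) : S → ℝ) := by
  choose h hH hlt hx hLx using fun x : S => hS x x.2
  let last : Fin n := ⟨n - 1, by omega⟩
  have hlast : ∀ i, i ≤ last := fun i => Fin.le_def.2 (by simp [last]; omega)
  let rH : H → H → Prop := Subrel r (· ∈ H)
  let g (x : S) (i : Fin n) : H := ⟨h x i, hH x i⟩
  have hglt (x : S) : ∀ i j, i < j → rH (g x i) (g x j) := hlt x
  let c (x : S) : H →₀ ℚ := mapDomain (g x) (equivFunOnFinite.symm s)
  have hc : LinearIndependent ℚ c := by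
    refine linearIndependent_of_injective_top rH c (fun x => g x last) ?_ ?_ ?_
    · intro x y hxy
      exact Subtype.ext (hL x.2 y.2 ((hLx x).trans ((congrArg Subtype.val hxy).trans (hLx y).symm)))
    · intro x
      rw [mapDomain_apply (injective_of_forall_lt_rel rH (hglt x))]
      exact hs last
    · exact fun x _ => mapDomain_apply_ne_zero_of_forall_lt_rel rH (hglt x) _ hlast
  have hcoe : ((↑) : S → ℝ) = linearCombination ℚ ((↑) : H → ℝ) ∘ c := by
    ext x
    rw [comp_apply, linearCombination_mapDomain, hx x]
    simp [linearCombination_apply, Finsupp.sum_fintype, Rat.smul_def, g]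
  rw [hcoe]
  exact hc.map' _ (LinearMap.ker_eq_bot.2 hind)
end

section
/- Let K₁ ⊆ K₂ be a field extension and T a transcendence basis for K₂ over K₁. Then for each x ∈ K₂ there is a unique minimal finite subset S ⊆ T such that x is algebraic over K₁(S). -/
/-!
The sets algebraically independent over `K₁` are the independent sets of a finitary matroid on
`K₂` whose closure operator sends `s` to the elements algebraic over `K₁(s)`. For an independent
set `T` closure commutes with intersections of subsets of `T`, so if `x` is algebraic over `K₁(S)`
and over `K₁(S')` for `S, S' ⊆ T`, it is algebraic over `K₁(S ∩ S')`; hence two minimal such `S`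
coincide. Finitarity provides a finite `S` to start from.
-/

namespace Matroid

variable {α : Type*} {M : Matroid α} {I : Set α} {e : α}

theorem Indep.subset_of_mem_closure_of_forall_ssubset [DecidableEq α] (hI : M.Indep I)
    {S S' : Finset α} (hSI : ↑S ⊆ I) (hS'I : ↑S' ⊆ I) (heS : e ∈ M.closure S)
    (heS' : e ∈ M.closure S') (hmin : ∀ S'' : Finset α, S'' ⊂ S → e ∉ M.closure S'') :
    S ⊆ S' := by
  have he_inter : e ∈ M.closure ↑(S ∩ S') := by
    rw [Finset.coe_inter, (hI.subset (Set.union_subset hSI hS'I)).closure_inter_eq_inter_closure]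
    exact ⟨heS, heS'⟩
  by_contra hSS'
  exact hmin _ (Finset.inter_subset_left.ssubset_of_ne (mt Finset.inter_eq_left.mp hSS'))
    he_inter

theorem Indep.existsUnique_minimal_finset_mem_closure [M.Finitary] (hI : M.Indep I)
    (he : e ∈ M.closure I) :
    ∃! S : Finset α, ↑S ⊆ I ∧ e ∈ M.closure S ∧
      ∀ S' : Finset α, S' ⊂ S → e ∉ M.closure S' := by
  classical
  obtain ⟨J, hJI, hJfin, -, heJ⟩ := M.exists_mem_finite_closure_of_mem_closure he
  obtain ⟨S, hS⟩ := exists_minimal_of_wellFoundedLT (fun S : Finset α ↦ ↑S ⊆ I ∧ e ∈ M.closure S)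
    ⟨hJfin.toFinset, by simpa using hJI, by simpa using heJ⟩
  have hmin : ∀ S' : Finset α, S' ⊂ S → e ∉ M.closure S' := fun S' hS'S heS' ↦
    (minimal_iff_forall_lt.mp hS).2 hS'S
      ⟨(Finset.coe_subset.mpr hS'S.subset).trans hS.prop.1, heS'⟩
  refine ⟨S, ⟨hS.prop.1, hS.prop.2, hmin⟩, fun S' ⟨hS'I, heS', hmin'⟩ ↦ ?_⟩
  exact (hI.subset_of_mem_closure_of_forall_ssubset hS'I hS.prop.1 heS' hS.prop.2 hmin').antisymm
    (hI.subset_of_mem_closure_of_forall_ssubset hS.prop.1 hS'I hS.prop.2 heS' hmin)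

end Matroid

theorem AlgebraicIndependent.mem_matroid_closure_iff_isAlgebraic_adjoin {F E : Type*} [Field F]
    [Field E] [Algebra F E] {s : Set E} {x : E} :
    x ∈ (AlgebraicIndependent.matroid F E).closure s ↔
      IsAlgebraic (IntermediateField.adjoin F s) x := by
  rw [AlgebraicIndependent.matroid_closure_eq, SetLike.mem_coe, Subalgebra.mem_algebraicClosure,
    IntermediateField.isAlgebraic_adjoin_iff]

theorem stmt6 (K₁ K₂ : Type) [Field K₁] [Field K₂] [Algebra K₁ K₂]
    (T : Set K₂) (hT : IsTranscendenceBasis K₁ ((↑) : T → K₂)) (x : K₂) :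
    ∃! S : Finset K₂, ↑S ⊆ T ∧
      IsAlgebraic (IntermediateField.adjoin K₁ (S : Set K₂)) x ∧
      ∀ S' : Finset K₂, S' ⊂ S →
        ¬ IsAlgebraic (IntermediateField.adjoin K₁ (S' : Set K₂)) x := by
  have hbase : (AlgebraicIndependent.matroid K₁ K₂).IsBase T :=
    AlgebraicIndependent.matroid_isBase_iff.mpr hT
  simpa only [AlgebraicIndependent.mem_matroid_closure_iff_isAlgebraic_adjoin] using
    hbase.indep.existsUnique_minimal_finset_mem_closure (hbase.closure_eq ▸ Set.mem_univ x)
end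

section
/- If 2^ℵ₀ ≤ κ⁺ for an infinite cardinal κ, then the set of all transcendental real numbers is a union of κ-many algebraically independent (over ℚ) sets. -/
/-!
Embed `E` into the initial ordinal of `κ⁺` and let `K w` be the field generated over `F` by the
elements sent to `≤ w`; each `K w` has at most `κ` algebraic elements. The level of `z` is the
least `w` with `z` algebraic over `K w`, so each level contains at most `κ` elements and can be
coloured injectively by `κ`. Within one colour the levels are distinct, and the element of highest level in
any finite subset is transcendental over the field generated by the others, since those are all
algebraic over a strictly earlier `K w`. Hence every colour class is algebraically independent.
-/

open Cardinal

section Levels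

variable {F E : Type*} [Field F] [Field E] [Algebra F E]

theorem IsAlgebraic.of_isAlgebraic_adjoin {L : IntermediateField F E} {t : Set E} {x : E}
    (ht : ∀ y ∈ t, IsAlgebraic L y) (hx : IsAlgebraic (Algebra.adjoin F t) x) :
    IsAlgebraic L x := by
  let M := algebraicClosure L E
  have hle : Algebra.adjoin F t ≤ (M.restrictScalars F).toSubalgebra :=
    Algebra.adjoin_le fun y hy => mem_algebraicClosure_iff.2 (ht y hy)
  have hxM : IsAlgebraic M x := hx.tower_top_of_subalgebra_le hle
  exact hxM.restrictScalars L

variable {W : Type*} [LinearOrder W] {K : W → IntermediateField F E} {Λ : E → W}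

theorem transcendental_adjoin_of_forall_level_lt (hK : Monotone K) {x : E}
    (hx : Transcendental F x) (hxmin : ∀ w < Λ x, ¬ IsAlgebraic (K w) x) {t : Finset E}
    (ht : ∀ y ∈ t, IsAlgebraic (K (Λ y)) y ∧ Λ y < Λ x) :
    Transcendental (Algebra.adjoin F (t : Set E)) x := by
  rcases t.eq_empty_or_nonempty with rfl | hne
  · rw [Finset.coe_empty, Algebra.adjoin_empty]
    exact fun h => hx ((Subalgebra.isAlgebraic_bot_iff (algebraMap F E).injective).1 h)
  obtain ⟨y₀, hy₀, hmax⟩ := t.exists_max_image Λ hne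
  refine fun halg => hxmin (Λ y₀) (ht y₀ hy₀).2 (halg.of_isAlgebraic_adjoin fun y hy => ?_)
  exact (ht y hy).1.tower_top_of_subalgebra_le (hK (hmax y hy))

theorem algebraicIndependent_of_injOn_level (hK : Monotone K) {S : Set E}
    (hS : ∀ x ∈ S, Transcendental F x) (hmem : ∀ x ∈ S, IsAlgebraic (K (Λ x)) x)
    (hmin : ∀ x ∈ S, ∀ w < Λ x, ¬ IsAlgebraic (K w) x) (hinj : S.InjOn Λ) :
    AlgebraicIndependent F ((↑) : S → E) := by
  classical
  refine algebraicIndependent_of_finite S fun t htS ht => ?_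
  lift t to Finset E using ht
  induction t using Finset.induction_on_max_value Λ with
  | empty => simpa using algebraicIndependent_empty (K := F) (A := E)
  | insert x t hx hmax ih =>
    rw [Finset.coe_insert, Set.insert_subset_iff] at htS
    rw [Finset.coe_insert]
    have hlt : ∀ y ∈ t, IsAlgebraic (K (Λ y)) y ∧ Λ y < Λ x := fun y hy =>
      ⟨hmem y (htS.2 hy), (hmax y hy).lt_of_ne fun h => hx (hinj (htS.2 hy) htS.1 h ▸ hy)⟩
    refine AlgebraicIndepOn.insert (x := id) (ih htS.2) ?_
    rw [Set.image_id]
    exact transcendental_adjoin_of_forall_level_lt hK (hS x htS.1) (hmin x htS.1) hlt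

end Levels

theorem exists_injective_prodMk_of_mk_fiber_le {α γ : Type u} {β : Type*} (f : α → β)
    (h : ∀ b, #{a // f a = b} ≤ #γ) :
    ∃ c : α → γ, Function.Injective fun a => (f a, c a) := by
  have e b : {a // f a = b} ↪ γ := Classical.choice ((le_def _ _).1 (h b))
  refine ⟨fun a => e (f a) ⟨a, rfl⟩, ?_⟩
  have hcomp : (fun a => (f a, e (f a) ⟨a, rfl⟩)) =
      Equiv.sigmaEquivProd _ _ ∘ Sigma.map id (fun b => e b) ∘ (Equiv.sigmaFiberEquiv f).symm :=
    rfl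
  rw [hcomp]
  exact (Equiv.injective _).comp
    ((Function.injective_id.sigma_map fun b => (e b).injective).comp (Equiv.injective _))

theorem mk_isAlgebraic_adjoin_le {F E : Type u} [Field F] [Field E] [Algebra F E]
    {κ : Cardinal.{u}} (hκ : ℵ₀ ≤ κ) (hF : #F ≤ κ) {s : Set E} (hs : #s ≤ κ) :
    #{x : E // IsAlgebraic (IntermediateField.adjoin F s) x} ≤ κ := by
  have hK : #(IntermediateField.adjoin F s) ≤ κ :=
    (IntermediateField.cardinalMk_adjoin_le F s).trans (max_le (max_le hF hs) hκ)
  exact (Algebraic.cardinalMk_le_max _ E).trans (max_le hK hκ)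

theorem Cardinal.mk_Iic_toType_ord_succ_le {κ : Cardinal} (hκ : ℵ₀ ≤ κ)
    (w : (Order.succ κ).ord.ToType) : #(Set.Iic w) ≤ κ := by
  have hW : #(Order.succ κ).ord.ToType = Order.succ κ := mk_ord_toType _
  exact Order.lt_succ_iff.1 <|
    (mk_Iic_lt w (by simp) ((hκ.trans (Order.le_succ κ)).trans_eq hW.symm)).trans_eq hW

theorem exists_iUnion_algebraicIndependent_eq_setOf_transcendental {F E : Type u} [Field F]
    [Field E] [Algebra F E] {κ : Cardinal.{u}} (hκ : ℵ₀ ≤ κ) (hF : #F ≤ κ)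
    (hE : #E ≤ Order.succ κ) :
    ∃ (ι : Type u) (S : ι → Set E), #ι ≤ κ ∧
      (∀ i, AlgebraicIndependent F ((↑) : S i → E)) ∧
      {x : E | Transcendental F x} = ⋃ i, S i := by
  let W := (Order.succ κ).ord.ToType
  obtain ⟨e⟩ : Nonempty (E ↪ W) := (le_def _ _).1 (by rwa [mk_ord_toType])
  let K (w : W) : IntermediateField F E := IntermediateField.adjoin F (e ⁻¹' Set.Iic w)
  have hK : Monotone K := fun v w hvw =>
    IntermediateField.adjoin.mono F _ _ (Set.preimage_mono (Set.Iic_subset_Iic.2 hvw))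
  have hKcard (w : W) : #{x : E // IsAlgebraic (K w) x} ≤ κ :=
    mk_isAlgebraic_adjoin_le hκ hF <|
      (mk_preimage_of_injective e _ e.injective).trans (mk_Iic_toType_ord_succ_le hκ w)
  have hlevel (z : E) : ∃ w, IsAlgebraic (K w) z := by
    have hz : z ∈ K (e z) := IntermediateField.subset_adjoin F _ (show e z ≤ e z from le_rfl)
    exact ⟨e z, isAlgebraic_algebraMap (⟨z, hz⟩ : K (e z))⟩
  let Λ (z : E) : W := wellFounded_lt.min _ (hlevel z)
  obtain ⟨c, hc⟩ := exists_injective_prodMk_of_mk_fiber_le (γ := κ.out) Λ fun w =>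
    (mk_subtype_mono fun z hz => hz ▸ wellFounded_lt.min_mem _ (hlevel z)).trans
      ((hKcard w).trans_eq (mk_out κ).symm)
  refine ⟨κ.out, fun j => {x | Transcendental F x ∧ c x = j}, (mk_out κ).le,
    fun j => ?_, ?_⟩
  · exact algebraicIndependent_of_injOn_level hK (fun x hx => hx.1)
      (fun x _ => wellFounded_lt.min_mem _ (hlevel x))
      (fun x _ w hw hxw => wellFounded_lt.not_lt_min {v | IsAlgebraic (K v) x} hxw hw)
      fun x hx y hy hxy => hc (Prod.ext hxy (hx.2.trans hy.2.symm))
  · ext x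
    simp

theorem stmt7 (κ : Cardinal.{0}) (hκ : ℵ₀ ≤ κ) (h : 𝔠 ≤ Order.succ κ) :
    ∃ (ι : Type) (S : ι → Set ℝ), #ι ≤ κ ∧
      (∀ i, AlgebraicIndependent ℚ ((↑) : S i → ℝ)) ∧
      {x : ℝ | Transcendental ℚ x} = ⋃ i, S i :=
  exists_iUnion_algebraicIndependent_eq_setOf_transcendental hκ (mkRat.trans_le hκ)
    (mk_real.trans_le h)
end

section
/- For an infinite cardinal κ: 2^ℵ₀ ≤ κ⁺ holds if and only if the set of all transcendental reals is a union of κ-many transcendence bases for ℝ over ℚ. -/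
/-!
Algebraic independence over `ℚ` is a finitary matroid on `ℝ` whose loops are the algebraic numbers
and in which the closure of a set of size at most `κ` has size at most `κ`.

If `𝔠 ≤ κ⁺`, enumerate `ℝ` in type `κ⁺` and let the stage of a transcendental `x` be the first
`w < κ⁺` such that `x` is algebraic over the first `w` reals. Each stage holds at most `κ` reals,
so they can be coloured with `κ` colours, injectively on every stage. A colour class meets each
stage at most once and none of its points is algebraic over the earlier ones, so it is
algebraically independent; extending every class to a transcendence basis gives the cover.

If `κ⁺⁺ ≤ 𝔠`, take algebraically independent reals `x_a` (`a < κ⁺`) and `y_g` (`g < κ⁺⁺`). Each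
sum `x_a + y_g` is transcendental, and colouring it by a basis containing it, a pigeonhole argument
gives `a ≠ a'`, `g ≠ g'` with the four sums in one basis. The relation
`(x_a + y_g) + (x_a' + y_g') = (x_a' + y_g) + (x_a + y_g')` contradicts the linear independence of
that basis.
-/

open Cardinal Set

universe u

theorem Matroid.indep_of_flat_filtration {α W : Type*} [LinearOrder W] {M : Matroid α}
    [M.Finitary] {I : Set α} (F : W → Set α) (hF : Monotone F) (hflat : ∀ w, M.IsFlat (F w))
    (c : α → W) (hc : InjOn c I) (hnonloop : ∀ e ∈ I, M.IsNonloop e)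
    (hmem : ∀ e ∈ I, e ∈ F (c e)) (hnotMem : ∀ e ∈ I, ∀ w < c e, e ∉ F w) : M.Indep I := by
  classical
  refine indep_iff_forall_finite_subset_indep.mpr fun J hJI hJfin => ?_
  lift J to Finset α using hJfin
  induction J using Finset.induction_on_max_value c with
  | empty => simp
  | insert a J haJ hmax ih =>
    have haI : a ∈ I := hJI (by simp)
    have hJI' : ↑J ⊆ I := fun x hx => hJI (by simp [Finset.mem_coe.mp hx])
    rw [Finset.coe_insert, (ih hJI').insert_indep_iff_of_notMem (by simpa using haJ)]
    refine ⟨(hnonloop a haI).mem_ground, ?_⟩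
    rcases J.eq_empty_or_nonempty with rfl | hJne
    · rw [Finset.coe_empty]
      exact (hnonloop a haI).not_isLoop
    obtain ⟨b, hbJ, hbmax⟩ := J.exists_max_image c hJne
    have hba : c b < c a := (hmax b hbJ).lt_of_ne fun h => haJ (hc (hJI' hbJ) haI h ▸ hbJ)
    have hJF : ↑J ⊆ F (c b) := fun x hx => hF (hbmax x hx) (hmem x (hJI' hx))
    exact fun ha => hnotMem a haI _ hba ((M.closure_mono hJF).trans (hflat _).closure.subset ha)

theorem Cardinal.exists_monotone_iUnion_eq_of_le_succ {α : Type u} {κ : Cardinal.{u}}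
    (hκ : ℵ₀ ≤ κ) {s : Set α} (hs : #s ≤ Order.succ κ) :
    ∃ A : (Order.succ κ).ord.ToType → Set α,
      Monotone A ∧ (∀ w, #(A w) ≤ κ) ∧ ⋃ w, A w = s := by
  obtain ⟨g⟩ : Nonempty (s ↪ (Order.succ κ).ord.ToType) := by
    rwa [← le_def, mk_ord_toType]
  refine ⟨fun w => Subtype.val '' {e | g e ≤ w}, fun w w' h => image_mono fun e he => le_trans he h,
    fun w => ?_, ?_⟩
  · have hIic : #(Iic w) < Order.succ κ := by
      simpa using mk_Iic_lt w (by simp) (by simpa using hκ.trans (Order.le_succ κ))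
    calc #(Subtype.val '' {e | g e ≤ w}) ≤ #{e | g e ≤ w} := mk_image_le
      _ ≤ #(Iic w) := mk_le_of_injective (f := fun e : {e | g e ≤ w} => (⟨g e, e.2⟩ : Iic w))
          fun e e' h => Subtype.ext (g.injective (congrArg Subtype.val h))
      _ ≤ κ := Order.lt_succ_iff.mp hIic
  · ext e
    simp only [mem_iUnion, mem_image, mem_ofPred_eq]
    exact ⟨fun ⟨_, e', _, he'⟩ => he' ▸ e'.2, fun he => ⟨g ⟨e, he⟩, ⟨e, he⟩, le_rfl, rfl⟩⟩

theorem Matroid.exists_isBase_family_iUnion_eq_setOf_isNonloop {α : Type u} (M : Matroid α)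
    [M.Finitary] {κ : Cardinal.{u}} (hκ : ℵ₀ ≤ κ) (hE : #M.E ≤ Order.succ κ)
    (hcl : ∀ X ⊆ M.E, #X ≤ κ → #(M.closure X) ≤ κ) :
    ∃ B : κ.out → Set α, (∀ i, M.IsBase (B i)) ∧ ⋃ i, B i = {e | M.IsNonloop e} := by
  obtain ⟨A, hAmono, hAcard, hAE⟩ := exists_monotone_iUnion_eq_of_le_succ hκ hE
  have hAE' : ∀ w, A w ⊆ M.E := fun w => hAE ▸ subset_iUnion A w
  have hstage : ∀ e ∈ M.E, ∃ w, e ∈ M.closure (A w) ∧ ∀ w' < w, e ∉ M.closure (A w') := by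
    intro e he
    obtain ⟨w, hw⟩ := mem_iUnion.mp (hAE ▸ he)
    obtain ⟨w₀, hw₀, hmin⟩ :=
      wellFounded_lt.has_min {w | e ∈ M.closure (A w)} ⟨w, M.mem_closure_of_mem hw (hAE' w)⟩
    exact ⟨w₀, hw₀, fun w' hw' he' => hmin w' he' hw'⟩
  have : Nonempty (Order.succ κ).ord.ToType := mk_ne_zero_iff.mp (by simp)
  choose! c hc hcmin using hstage
  have hcolour : ∀ w, ∃ f : α → κ.out, InjOn f (M.closure (A w)) := by
    have : Nonempty κ.out := mk_ne_zero_iff.mp (by simpa using (aleph0_pos.trans_le hκ).ne')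
    intro w
    obtain ⟨g⟩ : Nonempty (M.closure (A w) ↪ κ.out) := by
      rw [← le_def, mk_out]
      exact hcl _ (hAE' w) (hAcard w)
    exact exists_injOn_iff_injective.mpr ⟨g, g.injective⟩
  choose f hf using hcolour
  have hindep : ∀ i, M.Indep {e | M.IsNonloop e ∧ f (c e) e = i} := fun i =>
    M.indep_of_flat_filtration (fun w => M.closure (A w)) (fun _ _ h => M.closure_mono (hAmono h))
      (fun _ => M.isFlat_closure _) c
      (fun e he e' he' hce => hf _ (hc e he.1.mem_ground) (hce ▸ hc e' he'.1.mem_ground)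
        (he.2.trans (hce ▸ he'.2.symm)))
      (fun e he => he.1) (fun e he => hc e he.1.mem_ground) (fun e he => hcmin e he.1.mem_ground)
  choose B hB hIB using fun i => (hindep i).exists_isBase_superset
  refine ⟨B, hB, subset_antisymm ?_ ?_⟩
  · exact iUnion_subset fun i e he => (hB i).indep.isNonloop_of_mem he
  · exact fun e he => mem_iUnion.mpr ⟨_, hIB _ ⟨he, rfl⟩⟩

namespace AlgebraicIndependent

theorem matroid_isNonloop_iff {K L : Type*} [Field K] [Field L] [Algebra K L] {a : L} :
    (matroid K L).IsNonloop a ↔ Transcendental K a := by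
  rw [← Matroid.indep_singleton, matroid_indep_iff, AlgebraicIndepOn,
    algebraicIndependent_singleton_iff ⟨a, rfl⟩]
  rfl

theorem cardinalMk_matroid_closure_le {K L : Type u} [Field K] [Field L] [Algebra K L]
    (X : Set L) : #((matroid K L).closure X) ≤ #K ⊔ #X ⊔ ℵ₀ := by
  rw [matroid_closure_eq]
  calc #(Subalgebra.algebraicClosure (Algebra.adjoin K X) L : Set L)
      ≤ #(Algebra.adjoin K X) ⊔ ℵ₀ := Algebraic.cardinalMk_le_max (Algebra.adjoin K X) L
    _ ≤ #K ⊔ #X ⊔ ℵ₀ := sup_le (Algebra.cardinalMk_adjoin_le K X) le_sup_right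

theorem transcendental_add {K L ι : Type*} [Field K] [Field L] [Algebra K L] {x : ι → L}
    (hx : AlgebraicIndependent K x) {i j : ι} (hij : i ≠ j) : Transcendental K (x i + x j) := by
  have hi : Transcendental (Algebra.adjoin K {x j}) (x i) := by
    have : AlgebraicIndepOn K x {i, j} := hx.comp _ Subtype.val_injective
    rw [AlgebraicIndepOn.insert_iff (mem_singleton_iff.not.mpr hij), image_singleton] at this
    exact this.2
  intro hsum
  have hj : IsAlgebraic (Algebra.adjoin K {x j}) (x j) :=
    isAlgebraic_algebraMap (⟨x j, Algebra.subset_adjoin rfl⟩ : Algebra.adjoin K {x j})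
  exact hi (by simpa using (hsum.extendScalars (algebraMap K _).injective).sub hj)

end AlgebraicIndependent

theorem IsTranscendenceBasis.cardinalMk_eq_of_lt {K L : Type u} [Field K] [Field L] [Algebra K L]
    {s : Set L} (hs : IsTranscendenceBasis K ((↑) : s → L)) (h : #K ⊔ ℵ₀ < #L) : #s = #L := by
  rcases isEmpty_or_nonempty s with hempty | hne
  · have := hs.isEmpty_iff_isAlgebraic.mp hempty
    exact absurd (Algebra.IsAlgebraic.cardinalMk_le_max K L) h.not_ge
  · refine (mk_subtype_le _).antisymm (not_lt.mp fun hlt => ?_)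
    have := hs.lift_cardinalMk_eq_max_lift
    simp only [lift_id] at this
    exact (max_lt (max_lt (h.trans_le' le_sup_left) hlt) (h.trans_le' le_sup_right)).ne this.symm

theorem exists_monochromatic_rectangle {A G ι : Type u} (col : A → G → ι) (hA : ℵ₀ ≤ #A)
    (hι : #ι < #A) (hG : #A < #G) :
    ∃ a a' g g', a ≠ a' ∧ g ≠ g' ∧
      col a' g = col a g ∧ col a g' = col a g ∧ col a' g' = col a g := by
  have hpair : ∀ g, ∃ a a', a ≠ a' ∧ col a' g = col a g := by
    intro g
    by_contra! h
    exact hι.not_ge (mk_le_of_injective fun a a' hcol => by_contra fun hne => h a a' hne hcol.symm)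
  choose p p' hne hcol using hpair
  have hsmall : #(ι × A × A) ≤ #A := by
    simp only [mk_prod, lift_id, mul_eq_self hA]
    exact (mul_le_mul_left hι.le _).trans_eq (mul_eq_self hA)
  have hnotinj : ¬ Function.Injective fun g => (col (p g) g, p g, p' g) := fun hinj =>
    hG.not_ge ((mk_le_of_injective hinj).trans hsmall)
  obtain ⟨g, g', heq, hgg⟩ := Function.not_injective_iff.mp hnotinj
  simp only [Prod.mk.injEq] at heq
  obtain ⟨hc, ha, ha'⟩ := heq
  refine ⟨p g, p' g, g, g', hne g, hgg, hcol g, ?_, ?_⟩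
  · simpa [ha] using hc.symm
  · rw [ha', hcol, ← hc]

theorem LinearIndepOn.add_ne_add_s8 {K V : Type*} [Ring K] [Nontrivial K] [AddCommGroup V]
    [Module K V] {s : Set V} (hs : LinearIndepOn K id s) {a b c d : V} (ha : a ∈ s) (hb : b ∈ s)
    (hc : c ∈ s) (hd : d ∈ s) (hab : a ≠ b) (hac : a ≠ c) (had : a ≠ d) : a + d ≠ b + c := by
  classical
  intro h
  have := linearIndepOn_iff.mp hs
    (Finsupp.single a 1 + Finsupp.single d 1 - Finsupp.single b 1 - Finsupp.single c 1) ?_ ?_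
  · simpa [Finsupp.single_apply, hab, hac, had, hab.symm, hac.symm, had.symm] using
      DFunLike.congr_fun this a
  · exact sub_mem (sub_mem (add_mem (Finsupp.single_mem_supported K 1 ha)
      (Finsupp.single_mem_supported K 1 hd)) (Finsupp.single_mem_supported K 1 hb))
      (Finsupp.single_mem_supported K 1 hc)
  · simp [h]

theorem not_setOf_transcendental_subset_iUnion {K L : Type*} [Field K] [Field L] [Algebra K L]
    {A G ι : Type u} {x : A ⊕ G → L} (hx : AlgebraicIndependent K x) (hA : ℵ₀ ≤ #A)
    (hι : #ι < #A) (hG : #A < #G) (S : ι → Set L) (hS : ∀ i, LinearIndepOn K id (S i)) :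
    ¬ {y : L | Transcendental K y} ⊆ ⋃ i, S i := by
  intro hcover
  set z : A → G → L := fun a g => x (.inl a) + x (.inr g) with hz
  have hzinj : ∀ {a a' g g'}, z a g = z a' g' → a = a' ∧ g = g' := by
    intro a a' g g' h
    have hrange : LinearIndepOn K id (range x) := hx.linearIndependent.linearIndepOn_id
    have ha : a = a' := by
      by_contra ha
      refine hrange.add_ne_add_s8 (mem_range_self _) (mem_range_self _) (mem_range_self _)
        (mem_range_self _) ?_ ?_ ?_ h <;> simp [hx.injective.eq_iff, ha]
    subst ha
    exact ⟨rfl, Sum.inr_injective (hx.injective (add_left_cancel h))⟩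
  choose col hcol using fun a g => mem_iUnion.mp (hcover (hx.transcendental_add
    (Sum.inl_ne_inr (a := a) (b := g))))
  obtain ⟨a, a', g, g', ha, hg, h₁, h₂, h₃⟩ := exists_monochromatic_rectangle col hA hι hG
  refine (hS (col a g)).add_ne_add_s8 (hcol a g) (h₁ ▸ hcol a' g) (h₂ ▸ hcol a g') (h₃ ▸ hcol a' g')
    (fun h => ha (hzinj h).1) (fun h => hg (hzinj h).2) (fun h => ha (hzinj h).1) ?_
  simp only [hz]
  abel

theorem stmt8 (κ : Cardinal.{0}) (hκ : ℵ₀ ≤ κ) :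
    𝔠 ≤ Order.succ κ ↔
      ∃ (ι : Type) (S : ι → Set ℝ), #ι ≤ κ ∧
        (∀ i, IsTranscendenceBasis ℚ ((↑) : S i → ℝ)) ∧
        {x : ℝ | Transcendental ℚ x} = ⋃ i, S i := by
  constructor
  · intro h
    obtain ⟨B, hB, hcover⟩ :=
      (AlgebraicIndependent.matroid ℚ ℝ).exists_isBase_family_iUnion_eq_setOf_isNonloop hκ
        (by rwa [AlgebraicIndependent.matroid_e, mk_univ, mk_real]) fun X _ hX =>
          (AlgebraicIndependent.cardinalMk_matroid_closure_le X).trans (by simp [hX, hκ])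
    refine ⟨κ.out, B, (mk_out κ).le, hB, ?_⟩
    ext x
    simp [hcover, AlgebraicIndependent.matroid_isNonloop_iff]
  · rintro ⟨ι, S, hι, hS, hcover⟩
    by_contra hlt
    obtain ⟨s, hs⟩ := exists_isTranscendenceBasis ℚ ℝ
    have hscard : #s = 𝔠 := (hs.cardinalMk_eq_of_lt (by simp)).trans mk_real
    let A := (Order.succ κ).out
    let G := (Order.succ (Order.succ κ)).out
    obtain ⟨e⟩ : Nonempty (A ⊕ G ↪ s) := by
      rw [← le_def, mk_sum, lift_id, lift_id, mk_out, mk_out, hscard,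
        add_eq_max (hκ.trans (Order.le_succ κ)), max_eq_right (Order.le_succ _)]
      exact Order.succ_le_of_lt (not_le.mp hlt)
    exact not_setOf_transcendental_subset_iUnion (hs.1.comp e e.injective)
      ((mk_out _).symm ▸ hκ.trans (Order.le_succ κ)) ((mk_out _).symm ▸ Order.lt_succ_of_le hι)
      (by simp only [A, G, mk_out]; exact Order.lt_succ _) S (fun i => (hS i).1.linearIndependent)
      hcover.subset
end

section
/- Let T be a transcendence basis of ℝ over the field A = alg_ℝ(ℚ) of real algebraic numbers, and suppose x₀,…,x_k are reals, each xⱼ algebraic over A(Sⱼ) for finite sets Sⱼ ⊆ T, such that each xⱼ has a distinguished element tⱼ ∈ Sⱼ with xⱼ not algebraic over A(T \ {tⱼ}), and the tⱼ are pairwise distinct with t_k maximal in the sense that t_k ∉ S_i for all i < k. If x₀,…,x_{k-1} are algebraically independent over A, then x₀,…,x_k are algebraically independent over A. -/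
/-!
Every `xᵢ` with `i < k` is algebraic over `F = A(T \ {t_k})`, since `Sᵢ ⊆ T \ {t_k}`, whereas `x_k`
is not. Hence `F(x₀, …, x_{k-1})` is algebraic over `F`, so `x_k` stays transcendental over it, and
a fortiori over `A[x₀, …, x_{k-1}]`; adjoining a transcendental element preserves algebraic
independence.
-/

open IntermediateField

section

variable {K L : Type*} [Field K] [Field L] [Algebra K L] {ι : Type*}

theorem Transcendental.adjoin_range_of_isAlgebraic (F : IntermediateField K L) {x : ι → L}
    (hx : ∀ i, IsAlgebraic F (x i)) {y : L} (hy : Transcendental F y) :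
    Transcendental (Algebra.adjoin K (Set.range x)) y := by
  set E := adjoin F (Set.range x)
  have : Algebra.IsAlgebraic F E := isAlgebraic_adjoin fun _ ⟨i, hi⟩ ↦ hi ▸ (hx i).isIntegral
  have hle : Algebra.adjoin K (Set.range x) ≤ (E.restrictScalars K).toSubalgebra :=
    Algebra.adjoin_le (subset_adjoin F _)
  exact (hy.extendScalars E).of_tower_top_of_subalgebra_le hle

theorem AlgebraicIndependent.option_elim_of_isAlgebraic {x : ι → L}
    (hind : AlgebraicIndependent K x) (F : IntermediateField K L)
    (hx : ∀ i, IsAlgebraic F (x i)) {y : L} (hy : Transcendental F y) :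
    AlgebraicIndependent K fun o : Option ι ↦ o.elim y x :=
  (hind.option_iff_transcendental y).2 (hy.adjoin_range_of_isAlgebraic F hx)

theorem AlgebraicIndependent.of_castSucc_of_isAlgebraic {n : ℕ} {x : Fin (n + 1) → L}
    (hind : AlgebraicIndependent K fun i : Fin n ↦ x i.castSucc) (F : IntermediateField K L)
    (hx : ∀ i : Fin n, IsAlgebraic F (x i.castSucc)) (hlast : Transcendental F (x (Fin.last n))) :
    AlgebraicIndependent K x := by
  have hx_eq : x = (fun o : Option (Fin n) ↦ o.elim (x (Fin.last n)) fun i ↦ x i.castSucc) ∘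
      finSuccEquivLast := by
    funext j
    induction j using Fin.lastCases <;> simp
  rw [hx_eq, algebraicIndependent_equiv]
  exact hind.option_elim_of_isAlgebraic F hx hlast

end

theorem stmt10_general (A : IntermediateField ℚ ℝ)
    (T : Set ℝ)
    (k : ℕ) (x : Fin (k + 1) → ℝ) (S : Fin (k + 1) → Finset ℝ)
    (hST : ∀ j, ↑(S j) ⊆ T)
    (halg : ∀ j, IsAlgebraic (IntermediateField.adjoin A ((S j : Set ℝ))) (x j))
    (t : Fin (k + 1) → ℝ)
    (hnot : ∀ j, ¬ IsAlgebraic (IntermediateField.adjoin A (T \ {t j})) (x j))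
    (hmax : ∀ i : Fin (k + 1), i ≠ Fin.last k → t (Fin.last k) ∉ S i)
    (hind : AlgebraicIndependent A (fun i : Fin k => x i.castSucc)) :
    AlgebraicIndependent A x := by
  refine hind.of_castSucc_of_isAlgebraic (adjoin A (T \ {t (Fin.last k)})) (fun i ↦ ?_)
    (hnot (Fin.last k))
  have hsub : (S i.castSucc : Set ℝ) ⊆ T \ {t (Fin.last k)} := fun s hs ↦
    ⟨hST _ hs, fun hst ↦ hmax _ (Fin.castSucc_lt_last i).ne (hst ▸ hs)⟩
  exact (halg _).tower_top_of_subalgebra_le (adjoin.mono _ _ _ hsub)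

theorem stmt10 (A : IntermediateField ℚ ℝ) (hA : ∀ x : ℝ, x ∈ A ↔ IsAlgebraic ℚ x)
    (T : Set ℝ) (hT : IsTranscendenceBasis A ((↑) : T → ℝ))
    (k : ℕ) (x : Fin (k + 1) → ℝ) (S : Fin (k + 1) → Finset ℝ)
    (hST : ∀ j, ↑(S j) ⊆ T)
    (halg : ∀ j, IsAlgebraic (IntermediateField.adjoin A ((S j : Set ℝ))) (x j))
    (t : Fin (k + 1) → ℝ) (ht : ∀ j, t j ∈ S j)
    (hnot : ∀ j, ¬ IsAlgebraic (IntermediateField.adjoin A (T \ {t j})) (x j))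
    (htinj : Function.Injective t)
    (hmax : ∀ i : Fin (k + 1), i ≠ Fin.last k → t (Fin.last k) ∉ S i)
    (hind : AlgebraicIndependent A (fun i : Fin k => x i.castSucc)) :
    AlgebraicIndependent A x :=
  stmt10_general A T k x S hST halg t hnot hmax hind
end

section
/- Every well-ordering (X, ≺) of a set of reals admits, for each x ∈ X, the set of ≺-predecessors of x; if moreover X = ℝ and ≺ has order type ω₁, then ℝ ∖ alg_ℝ(ℚ) can be written as a countable-indexed union over (n, t-position data) of sets on each of which the map x ↦ (the ≺-greatest element of the minimal transcendence-basis support of x) is injective, and each such set is algebraically independent over ℚ. -/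
/-!
Work in the algebraic matroid of `ℝ` over `ℚ`, where `T` is independent, so closures of subsets
of `T` satisfy `cl A ∩ cl B = cl (A ∩ B)`. If `x` were algebraic over elements `y` with
`L y ≺ L x`, it would be algebraic over `ℚ(P)`, with `P` the elements of `T` preceding `L x`,
hence over `ℚ(M x ∩ P) ⊆ ℚ(M x \ {L x})`, contradicting minimality of `M x`. Hence on a set where
`L` is injective, adding elements in increasing order of `L` preserves independence. Each fibre
`L⁻¹ {t}` is countable, being algebraic over `ℚ` adjoined the countably many `≺`-predecessors of
`t` and `t` itself; enumerating every fibre by `ℕ` gives the sets `S m`.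
-/

open Set

namespace Matroid

variable {α : Type*} {M : Matroid α} {r : α → α → Prop} {I S : Set α}

structure IsSupportWithLast (M : Matroid α) (r : α → α → Prop) (I s : Set α) (l x : α) : Prop where
  subset : s ⊆ I
  mem_closure : x ∈ M.closure s
  notMem_closure_diff : x ∉ M.closure (s \ {l})
  rel_last : ∀ t ∈ s, t ≠ l → r t l

variable {supp : α → Set α} {L : α → α}

theorem notMem_closure_of_forall_rel_last [IsTrans α r] [Std.Irrefl r] (hI : M.Indep I)
    (hS : ∀ x ∈ S, M.IsSupportWithLast r I (supp x) (L x) x) {x : α} {J : Set α} (hx : x ∈ S) (hJS : J ⊆ S)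
    (hJ : ∀ y ∈ J, r (L y) (L x)) : x ∉ M.closure J := by
  intro hxJ
  have hJP : J ⊆ M.closure {t ∈ I | r t (L x)} := by
    intro y hy
    have hy' := hS y (hJS hy)
    refine M.closure_subset_closure (fun t ht ↦ ?_) hy'.mem_closure
    refine ⟨hy'.subset ht, ?_⟩
    obtain rfl | hne := eq_or_ne t (L y)
    · exact hJ y hy
    · exact _root_.trans (hy'.rel_last t ht hne) (hJ y hy)
  have hx_inter : x ∈ M.closure (supp x ∩ {t ∈ I | r t (L x)}) := by
    rw [(hI.subset (union_subset (hS x hx).subset (sep_subset _ _))).closure_inter_eq_inter_closure]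
    exact ⟨(hS x hx).mem_closure, M.closure_subset_closure_of_subset_closure hJP hxJ⟩
  refine (hS x hx).notMem_closure_diff (M.closure_subset_closure ?_ hx_inter)
  rintro t ⟨ht, -, htr⟩
  exact ⟨ht, by rintro rfl; exact irrefl _ htr⟩

theorem indep_of_injOn_last [M.Finitary] [IsStrictTotalOrder α r] (hI : M.Indep I)
    (hS : ∀ x ∈ S, M.IsSupportWithLast r I (supp x) (L x) x) (hinj : InjOn L S) :
    M.Indep S := by
  classical
  let := linearOrderOfSTO r
  refine indep_of_forall_finite_subset_indep S fun J hJS hJ ↦ ?_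
  lift J to Finset α using hJ
  induction J using Finset.induction_on_max_value L with
  | empty => simp
  | insert x J hxJ hmax ih =>
    rw [Finset.coe_insert, insert_subset_iff] at hJS
    have hnot := notMem_closure_of_forall_rel_last hI hS hJS.1 hJS.2 fun y hy ↦
      (hmax y hy).lt_of_ne fun h ↦ hxJ (hinj (hJS.2 hy) hJS.1 h ▸ hy)
    rw [Finset.coe_insert, (ih hJS.2).insert_indep_iff_of_notMem (by simpa)]
    exact ⟨M.closure_subset_ground _ (hS x hJS.1).mem_closure, hnot⟩

end Matroid

namespace AlgebraicIndependent

variable {F E : Type*} [Field F] [Field E] [Algebra F E]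

theorem mem_matroid_closure_iff {s : Set E} {x : E} :
    x ∈ (matroid F E).closure s ↔ IsAlgebraic (IntermediateField.adjoin F s) x := by
  rw [matroid_closure_eq, SetLike.mem_coe, Subalgebra.mem_algebraicClosure,
    IntermediateField.isAlgebraic_adjoin_iff]

theorem countable_matroid_closure [Countable F] {s : Set E} (hs : s.Countable) :
    ((matroid F E).closure s).Countable := by
  have : Countable (IntermediateField.adjoin F s) := by
    rw [← Cardinal.mk_le_aleph0_iff, ← Cardinal.lift_le_aleph0]
    refine (IntermediateField.lift_cardinalMk_adjoin_le F s).trans ?_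
    simp [Cardinal.mk_le_aleph0, hs.le_aleph0]
  convert Algebraic.countable (IntermediateField.adjoin F s) E using 1
  ext
  exact mem_matroid_closure_iff

end AlgebraicIndependent

open AlgebraicIndependent in
theorem stmt19 (r : ℝ → ℝ → Prop) (hwo : IsWellOrder ℝ r)
    (hω₁ : ∀ x : ℝ, {y : ℝ | r y x}.Countable)
    (T : Set ℝ) (hT : IsTranscendenceBasis ℚ ((↑) : T → ℝ))
    (M : ℝ → Finset ℝ)
    (hM : ∀ x : ℝ, Transcendental ℚ x →
      ↑(M x) ⊆ T ∧ IsAlgebraic (IntermediateField.adjoin ℚ ((M x : Set ℝ))) x ∧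
        ∀ S' : Finset ℝ, S' ⊂ M x →
          ¬ IsAlgebraic (IntermediateField.adjoin ℚ ((S' : Set ℝ))) x)
    (L : ℝ → ℝ)
    (hL : ∀ x : ℝ, Transcendental ℚ x →
      L x ∈ M x ∧ ∀ t ∈ M x, t ≠ L x → r t (L x)) :
    ∃ S : ℕ → Set ℝ,
      {x : ℝ | Transcendental ℚ x} = ⋃ m, S m ∧
      ∀ m, Set.InjOn L (S m) ∧ AlgebraicIndependent ℚ ((↑) : S m → ℝ) := by
  have hsupp : ∀ x, Transcendental ℚ x →
      (matroid ℚ ℝ).IsSupportWithLast r T (M x) (L x) x := fun x hx ↦ by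
    obtain ⟨hMT, halg, hmin⟩ := hM x hx
    obtain ⟨hLM, hlast⟩ := hL x hx
    refine ⟨hMT, mem_matroid_closure_iff.2 halg, ?_, hlast⟩
    rw [mem_matroid_closure_iff, ← Finset.coe_erase]
    exact hmin _ (Finset.erase_ssubset hLM)
  have hfiber : ∀ t, {x | Transcendental ℚ x ∧ L x = t}.Countable := fun t ↦ by
    refine (countable_matroid_closure (F := ℚ) ((hω₁ t).insert t)).mono ?_
    rintro x ⟨hx, rfl⟩
    refine (matroid ℚ ℝ).closure_subset_closure (fun s hs ↦ ?_) (hsupp x hx).mem_closure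
    obtain rfl | hne := eq_or_ne s (L x)
    · exact mem_insert _ _
    · exact mem_insert_of_mem _ ((hsupp x hx).rel_last s hs hne)
  choose φ hφ using fun t ↦ countable_iff_exists_injOn.1 (hfiber t)
  let S : ℕ → Set ℝ := fun m ↦ {x | Transcendental ℚ x ∧ φ (L x) x = m}
  have hinj : ∀ m, InjOn L (S m) := by
    rintro m x ⟨hx, rfl⟩ y ⟨hy, hφxy⟩ hLxy
    rw [← hLxy] at hφxy
    exact hφ (L x) ⟨hx, rfl⟩ ⟨hy, hLxy.symm⟩ hφxy.symm
  have := hwo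
  refine ⟨S, by ext x; simp [S], fun m ↦ ⟨hinj m, ?_⟩⟩
  exact Matroid.indep_of_injOn_last hT.1 (fun x hx ↦ hsupp x hx.1) (hinj m)
end
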